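/- arXiv:1602.08900 — 3 statements merged into one kernel-verified Lean document; each statement's English description precedes it below -/
import Mathlib

section
/- Let n ≥ 1 and J > 0, h > 0. On the complete graph K_n, every monotone path from ⊟ to ⊞ (i.e., every path that flips exactly one spin from −1 to +1 at each step) is an optimal path: its maximal energy equals the communication height, and moreover Φ(⊟,⊞) − H(⊟) = max_{0 ≤ m ≤ n} ( J·m·(n−m) − h·m ). -/
/-- Spin value of a Boolean: `+1` for `true`, `−1` for `false`. -/
def spin (b : Bool) : ℝ := if b then 1 else -1

/-- The product of the spins at the two endpoints of an unoriented edge. -/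
noncomputable def edgeEnergy {V : Type*} (σ : V → Bool) : Sym2 V → ℝ :=
  Sym2.lift ⟨fun v w => spin (σ v) * spin (σ w), fun v w => by ring⟩

/-- The Hamiltonian `H(σ) = −(J/2)·Σ_{(v,w)∈E} σ(v)σ(w) − (h/2)·Σ_v σ(v)` of a
multigraph with edge multiset `E` (edges counted with multiplicity). -/
noncomputable def hamiltonian {V : Type*} [Fintype V] (J h : ℝ)
    (E : Multiset (Sym2 V)) (σ : V → Bool) : ℝ :=
  -(J/2) * (E.map (edgeEnergy σ)).sum - (h/2) * ∑ v, spin (σ v)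

/-- Two spin configurations differ at exactly one vertex. -/
def IsFlipStep {V : Type*} [DecidableEq V] (σ τ : V → Bool) : Prop :=
  ∃ v, τ = Function.update σ v (! σ v)

/-- The communication height `Φ(ξ,ζ)`: the minimum over paths `γ : ξ → ζ` of
single spin-flips of the maximal energy along the path. -/
noncomputable def commHeight {V : Type*} [Fintype V] [DecidableEq V]
    (H : (V → Bool) → ℝ) (ξ ζ : V → Bool) : ℝ :=
  sInf { M : ℝ | ∃ (k : ℕ) (γ : Fin (k+1) → (V → Bool)),
    γ 0 = ξ ∧ γ (Fin.last k) = ζ ∧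
    (∀ i : Fin k, IsFlipStep (γ i.castSucc) (γ i.succ)) ∧
    M = Finset.univ.sup' ⟨0, Finset.mem_univ 0⟩ (fun i => H (γ i)) }

/-- The energy barrier `Γ* = Φ(⊟,⊞) − H(⊟)` of an energy landscape `H` on spin
configurations. -/
noncomputable def gammaStar {V : Type*} [Fintype V] [DecidableEq V]
    (H : (V → Bool) → ℝ) : ℝ :=
  commHeight H (fun _ => false) (fun _ => true) - H (fun _ => false)


/-- The edge multiset of the complete graph `K_n` on `Fin n`: all non-diagonal
unordered pairs, each once. -/
def completeEdges (n : ℕ) : Multiset (Sym2 (Fin n)) :=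
  (Finset.univ.filter (fun e : Sym2 (Fin n) => ¬ e.IsDiag)).val

/-! On `K_n` the energy of a configuration depends only on its number `m` of up-spins: since
`2 ∑_{v < w} σ_v σ_w = (∑_v σ_v)² − n`, one gets `H(σ) − H(⊟) = J m (n − m) − h m`. A spin-flip
changes `m` by at most one, so every path from `⊟` to `⊞` visits every `0 ≤ m ≤ n` and its maximal
energy is exactly `H(⊟) + max_m (J m (n − m) − h m)`. Thus all such paths, monotone or not, realise
the communication height. -/

open Finset

section Spins

variable {V : Type*} [Fintype V]

def upCount (σ : V → Bool) : ℕ := #{v | σ v = true}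

@[simp] theorem upCount_const_false : upCount (fun _ : V => false) = 0 := by simp [upCount]

@[simp] theorem upCount_const_true : upCount (fun _ : V => true) = Fintype.card V := by
  simp [upCount]

theorem upCount_le_card (σ : V → Bool) : upCount σ ≤ Fintype.card V := card_filter_le _ _

theorem upCount_update_le [DecidableEq V] (σ : V → Bool) (v : V) (b : Bool) :
    upCount (Function.update σ v b) ≤ upCount σ + 1 :=
  calc upCount (Function.update σ v b)
      ≤ #(insert v ({w | σ w = true} : Finset V)) := by
        refine card_le_card fun w hw => ?_
        by_cases hwv : w = v
        · simp [hwv]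
        · simpa [hwv, Function.update_of_ne hwv] using hw
    _ ≤ upCount σ + 1 := card_insert_le _ _

theorem sum_spin_eq (σ : V → Bool) :
    ∑ v, spin (σ v) = 2 * upCount σ - Fintype.card V := by
  have hspin : ∀ b, spin b = 2 * (if b = true then 1 else 0) - 1 := by
    rintro (_ | _) <;> norm_num [spin]
  simp only [hspin, sum_sub_distrib, ← mul_sum, sum_boole, sum_const, card_univ, upCount,
    nsmul_eq_mul, mul_one]

theorem sum_edgeEnergy_not_isDiag [DecidableEq V] (σ : V → Bool) :
    ∑ e ∈ univ.filter (fun e : Sym2 V => ¬ e.IsDiag), edgeEnergy σ e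
      = ((∑ v, spin (σ v)) ^ 2 - Fintype.card V) / 2 := by
  have hsq : ∀ b, spin b * spin b = 1 := by rintro (_ | _) <;> norm_num [spin]
  have hpolar : ∀ e : Sym2 V,
      QuadraticMap.polarSym2 (QuadraticMap.sq (R := ℝ)) (e.map (spin ∘ σ)) = 2 * edgeEnergy σ e := by
    refine Sym2.ind fun v w => ?_
    simp [QuadraticMap.polar, edgeEnergy]
    ring
  have := (QuadraticMap.sq (R := ℝ)).map_sum univ (spin ∘ σ)
  rw [sym2_univ, sum_congr rfl fun e _ => hpolar e, ← mul_sum] at this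
  simp only [QuadraticMap.sq_apply, Function.comp_apply, hsq, sum_const, card_univ,
    nsmul_eq_mul, mul_one] at this
  rw [sq, this]
  ring

end Spins

theorem Fin.exists_eq_of_succ_le_add_one {k : ℕ} {c : Fin (k + 1) → ℕ}
    (hc : ∀ i : Fin k, c i.succ ≤ c i.castSucc + 1) {m : ℕ}
    (h0 : c 0 ≤ m) (hlast : m ≤ c (Fin.last k)) : ∃ i, c i = m := by
  have key : ∀ i, c i < m ∨ ∃ j, c j = m := by
    intro i
    induction i using Fin.induction with
    | zero => exact h0.lt_or_eq.imp_right fun h => ⟨0, h⟩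
    | succ i ih =>
      rcases ih with hlt | hex
      · exact ((hc i).trans (Nat.succ_le_of_lt hlt)).lt_or_eq.imp_right fun h => ⟨_, h⟩
      · exact Or.inr hex
  exact (key (Fin.last k)).resolve_left (not_lt.2 hlast)

section Paths

variable {V : Type*} [Fintype V] [DecidableEq V]

structure IsFlipPath {k : ℕ} (γ : Fin (k + 1) → V → Bool) (ξ ζ : V → Bool) : Prop where
  start : γ 0 = ξ
  finish : γ (Fin.last k) = ζ
  step : ∀ i : Fin k, IsFlipStep (γ i.castSucc) (γ i.succ)

noncomputable def pathMax (H : (V → Bool) → ℝ) {k : ℕ} (γ : Fin (k + 1) → V → Bool) : ℝ :=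
  univ.sup' ⟨0, mem_univ 0⟩ fun i => H (γ i)

theorem commHeight_eq_pathMax {H : (V → Bool) → ℝ} {ξ ζ : V → Bool} {k : ℕ}
    {γ : Fin (k + 1) → V → Bool} (hγ : IsFlipPath γ ξ ζ)
    (hmin : ∀ (k' : ℕ) (γ' : Fin (k' + 1) → V → Bool), IsFlipPath γ' ξ ζ →
      pathMax H γ ≤ pathMax H γ') :
    commHeight H ξ ζ = pathMax H γ :=
  IsLeast.csInf_eq ⟨⟨k, γ, hγ.start, hγ.finish, hγ.step, rfl⟩, by
    rintro _ ⟨k', γ', h0, hlast, hstep, rfl⟩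
    exact hmin k' γ' ⟨h0, hlast, hstep⟩⟩

theorem IsFlipPath.exists_upCount_eq {k : ℕ} {γ : Fin (k + 1) → V → Bool}
    (hγ : IsFlipPath γ (fun _ => false) (fun _ => true)) {m : ℕ} (hm : m ≤ Fintype.card V) :
    ∃ i, upCount (γ i) = m :=
  Fin.exists_eq_of_succ_le_add_one (c := upCount ∘ γ)
    (fun i => by
      obtain ⟨v, hv⟩ := hγ.step i
      simpa only [Function.comp_apply, hv] using upCount_update_le _ _ _)
    (by simp [hγ.start]) (by simpa [hγ.finish] using hm)

end Paths

section CompleteGraph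

variable (n : ℕ) (J h : ℝ)

theorem hamiltonian_completeEdges (σ : Fin n → Bool) :
    hamiltonian J h (completeEdges n) σ = hamiltonian J h (completeEdges n) (fun _ => false)
      + (J * upCount σ * (n - upCount σ) - h * upCount σ) := by
  have hupCount : ∀ τ : Fin n → Bool, hamiltonian J h (completeEdges n) τ
      = -(J / 2) * (((2 * upCount τ - n) ^ 2 - n) / 2) - h / 2 * (2 * upCount τ - n) := by
    intro τ
    rw [hamiltonian, completeEdges, ← sum_eq_multiset_sum, sum_edgeEnergy_not_isDiag,
      sum_spin_eq, Fintype.card_fin]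
  rw [hupCount σ, hupCount, upCount_const_false]
  push_cast
  ring

theorem pathMax_completeEdges {k : ℕ} {γ : Fin (k + 1) → Fin n → Bool}
    (hγ : IsFlipPath γ (fun _ => false) (fun _ => true)) :
    pathMax (hamiltonian J h (completeEdges n)) γ
      = hamiltonian J h (completeEdges n) (fun _ => false)
        + (range (n + 1)).sup' nonempty_range_add_one fun m : ℕ => J * m * (n - m) - h * m := by
  obtain ⟨m, hm, hmax⟩ :=
    exists_mem_eq_sup' nonempty_range_add_one fun m : ℕ => J * m * (n - m) - h * m
  apply le_antisymm
  · refine sup'_le _ _ fun i _ => ?_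
    rw [hamiltonian_completeEdges]
    gcongr
    exact le_sup' (fun m : ℕ => J * m * (n - m) - h * m)
      (mem_range_succ_iff.2 ((upCount_le_card _).trans_eq (Fintype.card_fin n)))
  · obtain ⟨i, hi⟩ := hγ.exists_upCount_eq (m := m) (by simpa [Nat.lt_succ_iff] using hm)
    rw [hmax, ← hi, ← hamiltonian_completeEdges]
    exact le_sup' (fun i => hamiltonian J h (completeEdges n) (γ i)) (mem_univ i)

end CompleteGraph

theorem stmt4_general (n : ℕ) (J h : ℝ)
    (k : ℕ) (γ : Fin (k+1) → (Fin n → Bool))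
    (h0 : γ 0 = fun _ => false) (hlast : γ (Fin.last k) = fun _ => true)
    (hstep : ∀ i : Fin k, ∃ v, γ i.castSucc v = false ∧
        γ i.succ = Function.update (γ i.castSucc) v true) :
    (Finset.univ.sup' ⟨0, Finset.mem_univ 0⟩
        fun i => hamiltonian J h (completeEdges n) (γ i))
      = commHeight (hamiltonian J h (completeEdges n)) (fun _ => false) (fun _ => true) ∧
    commHeight (hamiltonian J h (completeEdges n)) (fun _ => false) (fun _ => true)
        - hamiltonian J h (completeEdges n) (fun _ => false)
      = (Finset.range (n+1)).sup' (Finset.nonempty_range_iff.mpr (Nat.succ_ne_zero n))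
          (fun m => J * m * ((n : ℝ) - m) - h * m) := by
  have hγ : IsFlipPath γ (fun _ => false) (fun _ => true) :=
    ⟨h0, hlast, fun i => by
      obtain ⟨v, hv, hupdate⟩ := hstep i
      exact ⟨v, by rw [hupdate, hv]; rfl⟩⟩
  have hcomm := commHeight_eq_pathMax hγ fun _ γ' hγ' =>
    (pathMax_completeEdges n J h hγ).trans_le (pathMax_completeEdges n J h hγ').ge
  refine ⟨hcomm.symm, ?_⟩
  rw [hcomm, pathMax_completeEdges n J h hγ, add_sub_cancel_left]

/-- Let `n ≥ 1` and `J > 0`, `h > 0`. On the complete graph `K_n`, every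
monotone path from `⊟` to `⊞` (flipping exactly one spin from `−1` to `+1` at
each step) is optimal: its maximal energy equals the communication height, and
moreover `Φ(⊟,⊞) − H(⊟) = max_{0 ≤ m ≤ n} (J·m·(n−m) − h·m)`. -/
theorem stmt4 (n : ℕ) (hn : 1 ≤ n) (J h : ℝ) (hJ : 0 < J) (hh : 0 < h)
    (k : ℕ) (γ : Fin (k+1) → (Fin n → Bool))
    (h0 : γ 0 = fun _ => false) (hlast : γ (Fin.last k) = fun _ => true)
    (hstep : ∀ i : Fin k, ∃ v, γ i.castSucc v = false ∧
        γ i.succ = Function.update (γ i.castSucc) v true) :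
    (Finset.univ.sup' ⟨0, Finset.mem_univ 0⟩
        fun i => hamiltonian J h (completeEdges n) (γ i))
      = commHeight (hamiltonian J h (completeEdges n)) (fun _ => false) (fun _ => true) ∧
    commHeight (hamiltonian J h (completeEdges n)) (fun _ => false) (fun _ => true)
        - hamiltonian J h (completeEdges n) (fun _ => false)
      = (Finset.range (n+1)).sup' (Finset.nonempty_range_iff.mpr (Nat.succ_ne_zero n))
          (fun m => J * m * ((n : ℝ) - m) - h * m) :=
  stmt4_general n J h k γ h0 hlast hstep
end

section
/- There exists a constant C > 0 such that for every even integer M ≥ 4, a uniformly random perfect matching of {1,…,M} satisfies P[ max_{1 ≤ x ≤ M} | Z̄_x − x(M−x)/(M−1) | > C·M^{3/4} ] ≤ C·M^{−1/4}. -/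
/-- The perfect matchings of `{1,…,M}` (modelled as `Fin M`): fixed-point-free
involutions of `Fin M`. -/
def matchings (M : ℕ) : Finset (Fin M → Fin M) :=
  Finset.univ.filter (fun ξ => (∀ i, ξ (ξ i) = i) ∧ ∀ i, ξ i ≠ i)

/-- `Z_x` : the number of elements of the first `x` points that are matched with
one of the first `x` points. -/
def Zcard (M : ℕ) (x : ℕ) (ξ : Fin M → Fin M) : ℕ :=
  (Finset.univ.filter (fun i : Fin M => (i : ℕ) < x ∧ ((ξ i : Fin M) : ℕ) < x)).card

/-!
For a set `s` of `a` points, let `crossCount s ξ` be the number of points of `s` that `ξ` matches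
outside `s`. Relabelling the points shows that `ξ i = k` has probability `1 / (M - 1)`, and
`ξ i = k ∧ ξ j = l` (four distinct points) probability `1 / ((M - 1) (M - 3))`; hence
`crossCount s ξ` has mean `a (M - a) / (M - 1)` and variance at most `M`. Now `Z̄_x` is the
count for `s = {1, …, x}`, and its deviation from the mean is `2`-Lipschitz in `x`. Chebyshev's
inequality at the `≈ M^{1/4}` points of a grid of mesh `⌈M^{3/4}⌉`, and a union bound, give the
theorem with `C = 8`.
-/

open Finset

theorem Finset.card_filter_lt_abs_mul_sq_le {ι : Type*} (s : Finset ι) (f : ι → ℝ) {T : ℝ}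
    (hT : 0 ≤ T) : #{i ∈ s | T < |f i|} * T ^ 2 ≤ ∑ i ∈ s, f i ^ 2 :=
  calc (#{i ∈ s | T < |f i|} : ℝ) * T ^ 2 = ∑ i ∈ s with T < |f i|, T ^ 2 := by
        rw [sum_const, nsmul_eq_mul]
    _ ≤ ∑ i ∈ s with T < |f i|, f i ^ 2 := sum_le_sum fun i hi => by
        rw [← sq_abs (f i)]
        exact pow_le_pow_left₀ hT (mem_filter.1 hi).2.le 2
    _ ≤ ∑ i ∈ s, f i ^ 2 :=
        sum_le_sum_of_subset_of_nonneg (filter_subset _ _) fun _ _ _ => sq_nonneg _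

-- With `a = #s`, `b = #sᶜ`, `a + b = M`, the left side is `(M - 1)² (M - 3)` times the variance
-- of `crossCount s`.
lemma two_mul_mul_sub_le_of_four_le_add {a b : ℝ} (ha : 0 ≤ a) (hb : 0 ≤ b) (hab : 4 ≤ a + b) :
    2 * (a * b) * (a * b - (a + b - 1)) ≤ (a + b) * ((a + b - 1) ^ 2 * (a + b - 3)) := by
  have hprod : 4 * (a * b) ≤ (a + b) ^ 2 := by nlinarith [sq_nonneg (a - b)]
  have hquartic : (a + b) ^ 4 ≤ 8 * ((a + b) * ((a + b - 1) ^ 2 * (a + b - 3))) := by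
    nlinarith [mul_nonneg (mul_nonneg (sub_nonneg.2 hab) (sub_nonneg.2 hab)) (sub_nonneg.2 hab),
      mul_nonneg (sub_nonneg.2 hab) (sub_nonneg.2 hab)]
  nlinarith [mul_nonneg (mul_nonneg ha hb) (by linarith : (0 : ℝ) ≤ a + b - 1),
    mul_le_mul hprod hprod (by positivity) (by positivity)]

section Matchings

variable {M : ℕ}

lemma mem_matchings {ξ : Fin M → Fin M} :
    ξ ∈ matchings M ↔ (∀ i, ξ (ξ i) = i) ∧ ∀ i, ξ i ≠ i := by
  simp [matchings]

lemma injective_of_mem_matchings {ξ : Fin M → Fin M} (hξ : ξ ∈ matchings M) :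
    Function.Injective ξ :=
  Function.LeftInverse.injective (mem_matchings.1 hξ).1

lemma arrowCongr_mem_matchings (σ : Equiv.Perm (Fin M)) {ξ : Fin M → Fin M}
    (hξ : ξ ∈ matchings M) : σ.arrowCongr σ ξ ∈ matchings M := by
  rw [mem_matchings] at hξ ⊢
  refine ⟨fun i => by simp [hξ.1], fun i => ?_⟩
  simpa [← Equiv.eq_symm_apply] using hξ.2 (σ.symm i)

lemma arrowCongr_mem_matchings_iff (σ : Equiv.Perm (Fin M)) {ξ : Fin M → Fin M} :
    σ.arrowCongr σ ξ ∈ matchings M ↔ ξ ∈ matchings M := by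
  refine ⟨fun h => ?_, arrowCongr_mem_matchings σ⟩
  convert arrowCongr_mem_matchings σ.symm h
  ext; simp

lemma card_matchings_filter_arrowCongr (σ : Equiv.Perm (Fin M))
    (p : (Fin M → Fin M) → Prop) [DecidablePred p] :
    #{ξ ∈ matchings M | p (σ.arrowCongr σ ξ)} = #{ξ ∈ matchings M | p ξ} :=
  card_equiv (σ.arrowCongr σ) fun ξ => by simp [arrowCongr_mem_matchings_iff]

lemma card_matchings_apply_eq_congr {i k i' k' : Fin M} (h : Function.Injective ![i, k])
    (h' : Function.Injective ![i', k']) :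
    #{ξ ∈ matchings M | ξ i = k} = #{ξ ∈ matchings M | ξ i' = k'} := by
  obtain ⟨σ, hσ⟩ := Equiv.Perm.exists_extending_pair _ _ h h'
  have hi : σ i = i' := hσ 0
  have hk : σ k = k' := hσ 1
  rw [← card_matchings_filter_arrowCongr σ (fun ξ => ξ i' = k')]
  refine congrArg card (filter_congr fun ξ _ => ?_)
  simp [← hi, ← hk]

lemma card_matchings_apply_eq_and_apply_eq_congr {i j k l i' j' k' l' : Fin M}
    (h : Function.Injective ![i, j, k, l]) (h' : Function.Injective ![i', j', k', l']) :
    #{ξ ∈ matchings M | ξ i = k ∧ ξ j = l} = #{ξ ∈ matchings M | ξ i' = k' ∧ ξ j' = l'} := by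
  obtain ⟨σ, hσ⟩ := Equiv.Perm.exists_extending_pair _ _ h h'
  have hi : σ i = i' := hσ 0
  have hj : σ j = j' := hσ 1
  have hk : σ k = k' := hσ 2
  have hl : σ l = l' := hσ 3
  rw [← card_matchings_filter_arrowCongr σ (fun ξ => ξ i' = k' ∧ ξ j' = l')]
  refine congrArg card (filter_congr fun ξ _ => ?_)
  simp [← hi, ← hj, ← hk, ← hl]

lemma card_matchings_apply_eq {i k : Fin M} (hik : i ≠ k) :
    ((M : ℝ) - 1) * #{ξ ∈ matchings M | ξ i = k} = #(matchings M) := by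
  have hfib : #(matchings M) = ∑ k' ∈ univ.erase i, #{ξ ∈ matchings M | ξ i = k'} :=
    card_eq_sum_card_fiberwise fun ξ hξ =>
      mem_erase.2 ⟨(mem_matchings.1 (mem_coe.1 hξ)).2 i, mem_univ _⟩
  have hcard : (#(univ.erase i) : ℝ) + 1 = M := by
    exact_mod_cast (card_erase_add_one (mem_univ i)).trans (by simp)
  rw [hfib, sum_const_nat (m := #{ξ ∈ matchings M | ξ i = k}) fun k' hk' =>
    card_matchings_apply_eq_congr
      (by simp [Function.Injective, Fin.forall_fin_succ, ne_of_mem_erase hk', Ne.symm])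
      (by simp [Function.Injective, Fin.forall_fin_succ, hik, hik.symm])]
  push_cast
  rw [← hcard]
  ring

lemma card_matchings_apply_eq_and_apply_eq {i j k l : Fin M} (hij : i ≠ j) (hik : i ≠ k)
    (hil : i ≠ l) (hjk : j ≠ k) (hjl : j ≠ l) (hkl : k ≠ l) :
    ((M : ℝ) - 3) * #{ξ ∈ matchings M | ξ i = k ∧ ξ j = l} = #{ξ ∈ matchings M | ξ i = k} := by
  have hfib : #{ξ ∈ matchings M | ξ i = k}
      = ∑ l' ∈ ((univ.erase i).erase j).erase k,
          #{ξ ∈ {ξ ∈ matchings M | ξ i = k} | ξ j = l'} := by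
    refine card_eq_sum_card_fiberwise fun ξ hξ => ?_
    obtain ⟨hξ, hξi⟩ := mem_filter.1 (mem_coe.1 hξ)
    refine mem_erase.2 ⟨fun h => hij ?_, mem_erase.2 ⟨(mem_matchings.1 hξ).2 j,
      mem_erase.2 ⟨fun h => hjk ?_, mem_univ _⟩⟩⟩
    · exact injective_of_mem_matchings hξ (hξi.trans h.symm)
    · rw [← hξi, ← h, (mem_matchings.1 hξ).1]
  have hcard : (#(((univ.erase i).erase j).erase k) : ℝ) + 3 = M := by
    have h1 := card_erase_add_one (s := univ.erase i) (mem_erase.2 ⟨hij.symm, mem_univ j⟩)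
    have h2 := card_erase_add_one (s := (univ.erase i).erase j)
      (mem_erase.2 ⟨hjk.symm, mem_erase.2 ⟨hik.symm, mem_univ k⟩⟩)
    have h3 := card_erase_add_one (mem_univ i)
    simp only [card_univ, Fintype.card_fin] at h3
    exact_mod_cast (by omega : _ + 3 = M)
  simp only [filter_filter] at hfib
  rw [hfib, sum_const_nat (m := #{ξ ∈ matchings M | ξ i = k ∧ ξ j = l}) fun l' hl' => ?_]
  · push_cast
    rw [← hcard]
    ring
  · simp only [mem_erase] at hl'
    exact card_matchings_apply_eq_and_apply_eq_congr
      (by simp [Function.Injective, Fin.forall_fin_succ, hij, hik, hl'.2.2.1, hjk, hl'.2.1,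
        hl'.1, Ne.symm])
      (by simp [Function.Injective, Fin.forall_fin_succ, hij, hik, hil, hjk, hjl, hkl, Ne.symm])

lemma card_matchings_apply_mem {i : Fin M} {t : Finset (Fin M)} (hi : i ∉ t) :
    ((M : ℝ) - 1) * #{ξ ∈ matchings M | ξ i ∈ t} = #t * #(matchings M) := by
  have hfiber : ∀ k ∈ t, ((M : ℝ) - 1) * #{ξ ∈ matchings M | ξ i ∈ t ∧ ξ i = k}
      = #(matchings M) := fun k hk => by
    rw [← card_matchings_apply_eq (ne_of_mem_of_not_mem hk hi).symm]
    congr 3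
    exact filter_congr fun ξ _ => and_iff_right_of_imp (· ▸ hk)
  rw [card_eq_sum_card_fiberwise (s := {ξ ∈ matchings M | ξ i ∈ t}) (f := (· i)) (t := t)
    fun ξ hξ => (mem_filter.1 hξ).2]
  simp only [filter_filter]
  push_cast
  rw [mul_sum, sum_congr rfl hfiber, sum_const, nsmul_eq_mul]

lemma card_matchings_apply_mem_and_apply_mem {i j : Fin M} {t : Finset (Fin M)} (hij : i ≠ j)
    (hi : i ∉ t) (hj : j ∉ t) :
    ((M : ℝ) - 1) * ((M : ℝ) - 3) * #{ξ ∈ matchings M | ξ i ∈ t ∧ ξ j ∈ t}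
      = #t * (#t - 1) * #(matchings M) := by
  have hfiber : ∀ p ∈ t.offDiag, ((M : ℝ) - 1) * ((M : ℝ) - 3) *
      #{ξ ∈ matchings M | (ξ i ∈ t ∧ ξ j ∈ t) ∧ (ξ i, ξ j) = p} = #(matchings M) := by
    rintro ⟨k, l⟩ hp
    obtain ⟨hk, hl, hkl⟩ := mem_offDiag.1 hp
    have hki := ne_of_mem_of_not_mem hk hi
    have hkj := ne_of_mem_of_not_mem hk hj
    have hli := ne_of_mem_of_not_mem hl hi
    have hlj := ne_of_mem_of_not_mem hl hj
    rw [← card_matchings_apply_eq hki.symm, ← card_matchings_apply_eq_and_apply_eq hij hki.symm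
      hli.symm hkj.symm hlj.symm hkl, mul_assoc]
    congr 4
    refine filter_congr fun ξ _ => ?_
    rw [Prod.mk.injEq]
    exact and_iff_right_of_imp fun h => ⟨h.1 ▸ hk, h.2 ▸ hl⟩
  rw [card_eq_sum_card_fiberwise (s := {ξ ∈ matchings M | ξ i ∈ t ∧ ξ j ∈ t})
    (f := fun ξ => (ξ i, ξ j)) (t := t.offDiag) fun ξ hξ => ?_]
  · simp only [filter_filter]
    push_cast
    rw [mul_sum, sum_congr rfl hfiber, sum_const, nsmul_eq_mul, offDiag_card,
      Nat.cast_sub (Nat.le_mul_self _)]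
    push_cast
    ring
  · obtain ⟨hξ, hi', hj'⟩ := mem_filter.1 (mem_coe.1 hξ)
    exact mem_offDiag.2 ⟨hi', hj', fun h => hij (injective_of_mem_matchings hξ h)⟩

end Matchings

section CrossCount

variable {α : Type*} [Fintype α] [DecidableEq α]

def crossCount (s : Finset α) (ξ : α → α) : ℕ := #{i ∈ s | ξ i ∈ sᶜ}

lemma crossCount_le_add_card_sdiff {s s' : Finset α} (hss' : s ⊆ s') (ξ : α → α) :
    crossCount s' ξ ≤ crossCount s ξ + #(s' \ s) := by
  refine (card_le_card fun i hi => ?_).trans (card_union_le _ _)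
  simp only [mem_filter, mem_compl, mem_union, mem_sdiff] at hi ⊢
  by_cases h : i ∈ s
  · exact .inl ⟨h, fun h' => hi.2 (hss' h')⟩
  · exact .inr ⟨hi.1, h⟩

lemma crossCount_le_crossCount_add_card_sdiff {s s' : Finset α} (hss' : s ⊆ s') {ξ : α → α}
    (hξ : Function.Injective ξ) : crossCount s ξ ≤ crossCount s' ξ + #(s' \ s) := by
  refine (card_le_card (t := {i ∈ s' | ξ i ∈ s'ᶜ} ∪ {i ∈ s | ξ i ∈ s' \ s})
    fun i hi => ?_).trans ((card_union_le _ _).trans (Nat.add_le_add_left ?_ _))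
  · simp only [mem_filter, mem_compl, mem_union, mem_sdiff] at hi ⊢
    by_cases h : ξ i ∈ s'
    · exact .inr ⟨hi.1, h, hi.2⟩
    · exact .inl ⟨hss' hi.1, h⟩
  · exact card_le_card_of_injOn ξ (fun i hi => (mem_filter.1 hi).2) hξ.injOn

lemma abs_crossCount_sub_le {s s' : Finset α} (hss' : s ⊆ s') {ξ : α → α}
    (hξ : Function.Injective ξ) : |(crossCount s' ξ : ℝ) - crossCount s ξ| ≤ #(s' \ s) := by
  have h1 : (crossCount s' ξ : ℝ) ≤ crossCount s ξ + #(s' \ s) := by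
    exact_mod_cast crossCount_le_add_card_sdiff hss' ξ
  have h2 : (crossCount s ξ : ℝ) ≤ crossCount s' ξ + #(s' \ s) := by
    exact_mod_cast crossCount_le_crossCount_add_card_sdiff hss' hξ
  exact abs_sub_le_iff.2 ⟨by linarith, by linarith⟩

end CrossCount

section Moments

variable {M : ℕ}

lemma sum_crossCount (s : Finset (Fin M)) :
    ((M : ℝ) - 1) * ∑ ξ ∈ matchings M, (crossCount s ξ : ℝ) = #s * #sᶜ * #(matchings M) := by
  have hswap : ∑ ξ ∈ matchings M, crossCount s ξ
      = ∑ i ∈ s, #{ξ ∈ matchings M | ξ i ∈ sᶜ} := by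
    simp only [crossCount, card_eq_sum_ones, sum_filter]
    exact sum_comm
  rw [← Nat.cast_sum, hswap, Nat.cast_sum, mul_sum,
    sum_congr rfl fun i hi => card_matchings_apply_mem (notMem_compl.2 hi), sum_const,
    nsmul_eq_mul, mul_assoc]

lemma crossCount_sq (s : Finset (Fin M)) (ξ : Fin M → Fin M) :
    (crossCount s ξ : ℝ) ^ 2 = crossCount s ξ + #{p ∈ s.offDiag | ξ p.1 ∈ sᶜ ∧ ξ p.2 ∈ sᶜ} := by
  have hpairs : {p ∈ s.offDiag | ξ p.1 ∈ sᶜ ∧ ξ p.2 ∈ sᶜ} = {i ∈ s | ξ i ∈ sᶜ}.offDiag := by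
    ext p
    simp only [mem_filter, mem_offDiag]
    tauto
  rw [hpairs, offDiag_card, Nat.cast_sub (Nat.le_mul_self _), crossCount]
  push_cast
  ring

lemma sum_crossCount_sq (s : Finset (Fin M)) :
    ((M : ℝ) - 1) * ((M : ℝ) - 3) * ∑ ξ ∈ matchings M, (crossCount s ξ : ℝ) ^ 2
      = ((M - 3) * #s * #sᶜ + #s * (#s - 1) * #sᶜ * (#sᶜ - 1)) * #(matchings M) := by
  have hswap : ∑ ξ ∈ matchings M, #{p ∈ s.offDiag | ξ p.1 ∈ sᶜ ∧ ξ p.2 ∈ sᶜ}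
      = ∑ p ∈ s.offDiag, #{ξ ∈ matchings M | ξ p.1 ∈ sᶜ ∧ ξ p.2 ∈ sᶜ} := by
    simp only [card_eq_sum_ones, sum_filter]
    exact sum_comm
  have hpairs : ((M : ℝ) - 1) * ((M : ℝ) - 3) *
      ∑ ξ ∈ matchings M, (#{p ∈ s.offDiag | ξ p.1 ∈ sᶜ ∧ ξ p.2 ∈ sᶜ} : ℝ)
      = #s * (#s - 1) * (#sᶜ * (#sᶜ - 1) * #(matchings M)) := by
    rw [← Nat.cast_sum, hswap, Nat.cast_sum, mul_sum, sum_congr rfl fun p hp =>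
      card_matchings_apply_mem_and_apply_mem (mem_offDiag.1 hp).2.2
        (notMem_compl.2 (mem_offDiag.1 hp).1) (notMem_compl.2 (mem_offDiag.1 hp).2.1),
      sum_const, nsmul_eq_mul, offDiag_card, Nat.cast_sub (Nat.le_mul_self _)]
    push_cast
    ring
  rw [sum_congr rfl fun ξ _ => crossCount_sq s ξ, sum_add_distrib, mul_add, hpairs]
  linear_combination ((M : ℝ) - 3) * sum_crossCount s

lemma sum_sq_crossCount_sub_le (hM : 4 ≤ M) (s : Finset (Fin M)) :
    ∑ ξ ∈ matchings M, ((crossCount s ξ : ℝ) - #s * ((M : ℝ) - #s) / ((M : ℝ) - 1)) ^ 2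
      ≤ (M : ℝ) * #(matchings M) := by
  have hab : (#s : ℝ) + #sᶜ = M := by
    exact_mod_cast (card_add_card_compl s).trans (Fintype.card_fin M)
  have hM' : (4 : ℝ) ≤ M := by exact_mod_cast hM
  have ha : (0 : ℝ) ≤ #s := by positivity
  have hb : (0 : ℝ) ≤ #sᶜ := by positivity
  have hm : (0 : ℝ) ≤ #(matchings M) := by positivity
  have hS1 := sum_crossCount s
  have hS2 := sum_crossCount_sq s
  rw [show (M : ℝ) - #s = #sᶜ by linarith]
  simp only [sub_sq, sum_add_distrib, sum_sub_distrib, ← sum_mul, ← mul_sum, sum_const,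
    nsmul_eq_mul]
  generalize ∑ ξ ∈ matchings M, (crossCount s ξ : ℝ) = S1 at *
  generalize ∑ ξ ∈ matchings M, (crossCount s ξ : ℝ) ^ 2 = S2 at *
  generalize (#s : ℝ) = a at *
  generalize (#sᶜ : ℝ) = b at *
  generalize (#(matchings M) : ℝ) = m at *
  generalize (M : ℝ) = N at *
  subst hab
  have h1 : 0 < a + b - 1 := by linarith
  have h3 : 0 < a + b - 3 := by linarith
  rw [eq_div_of_mul_eq h1.ne' ((mul_comm _ _).trans hS1),
    eq_div_of_mul_eq (by positivity) ((mul_comm _ _).trans hS2)]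
  have hvar : ((a + b - 3) * a * b + a * (a - 1) * b * (b - 1)) * m / ((a + b - 1) * (a + b - 3))
      - 2 * (a * b * m / (a + b - 1)) * (a * b / (a + b - 1)) + m * (a * b / (a + b - 1)) ^ 2
      = 2 * (a * b) * (a * b - (a + b - 1)) * m / ((a + b - 1) ^ 2 * (a + b - 3)) := by
    field_simp
    ring
  rw [hvar, div_le_iff₀ (by positivity)]
  nlinarith [mul_le_mul_of_nonneg_right (two_mul_mul_sub_le_of_four_le_add ha hb hM') hm]

end Moments

section Deviation

variable {M : ℕ}

def initialSeg (M x : ℕ) : Finset (Fin M) := {i | (i : ℕ) < x}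

lemma card_initialSeg {x : ℕ} (hx : x ≤ M) : #(initialSeg M x) = x := by
  simp [initialSeg, Fin.card_filter_val_lt, hx]

lemma card_initialSeg_sdiff {x y : ℕ} (hxy : x ≤ y) (hy : y ≤ M) :
    #(initialSeg M y \ initialSeg M x) = y - x := by
  have hsub : initialSeg M x ⊆ initialSeg M y := fun i hi => by
    simp only [initialSeg, mem_filter, mem_univ, true_and] at hi ⊢
    omega
  rw [card_sdiff_of_subset hsub, card_initialSeg hy, card_initialSeg (hxy.trans hy)]

lemma Zcard_add_crossCount_initialSeg {x : ℕ} (hx : x ≤ M) (ξ : Fin M → Fin M) :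
    Zcard M x ξ + crossCount (initialSeg M x) ξ = x := by
  calc Zcard M x ξ + crossCount (initialSeg M x) ξ
      = #{i ∈ initialSeg M x | ξ i ∈ initialSeg M x}
        + #{i ∈ initialSeg M x | ξ i ∉ initialSeg M x} := by
        simp only [Zcard, crossCount, initialSeg, filter_filter, mem_compl, mem_filter,
          mem_univ, true_and]
    _ = x := by rw [card_filter_add_card_filter_not, card_initialSeg hx]

noncomputable def deviation (M x : ℕ) (ξ : Fin M → Fin M) : ℝ :=
  ((x : ℝ) - Zcard M x ξ) - x * ((M : ℝ) - x) / ((M : ℝ) - 1)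

lemma deviation_eq {x : ℕ} (hx : x ≤ M) (ξ : Fin M → Fin M) :
    deviation M x ξ = crossCount (initialSeg M x) ξ - x * ((M : ℝ) - x) / ((M : ℝ) - 1) := by
  have h : (Zcard M x ξ : ℝ) + crossCount (initialSeg M x) ξ = x := by
    exact_mod_cast Zcard_add_crossCount_initialSeg hx ξ
  rw [deviation, ← h]
  ring

lemma card_abs_deviation_gt_mul_sq_le (hM : 4 ≤ M) {x : ℕ} (hx : x ≤ M) {T : ℝ} (hT : 0 ≤ T) :
    #{ξ ∈ matchings M | T < |deviation M x ξ|} * T ^ 2 ≤ (M : ℝ) * #(matchings M) := by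
  have hvar := sum_sq_crossCount_sub_le hM (initialSeg M x)
  rw [card_initialSeg hx] at hvar
  calc _ ≤ ∑ ξ ∈ matchings M, deviation M x ξ ^ 2 := card_filter_lt_abs_mul_sq_le _ _ hT
    _ ≤ _ := by simpa only [deviation_eq hx] using hvar

lemma abs_mul_sub_div_sub_le {x y : ℕ} (hM : 2 ≤ M) (hxy : x ≤ y) (hy : y ≤ M) :
    |(y : ℝ) * (M - y) / (M - 1) - x * (M - x) / (M - 1)| ≤ y - x := by
  rcases hxy.eq_or_lt with rfl | hlt
  · simp
  have hM' : (1 : ℝ) < M := by exact_mod_cast hM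
  have hxy' : (x : ℝ) + 1 ≤ y := by exact_mod_cast hlt
  have hy' : (y : ℝ) ≤ M := by exact_mod_cast hy
  have hx0 : (0 : ℝ) ≤ x := Nat.cast_nonneg x
  rw [← sub_div, abs_div, abs_of_pos (by linarith : (0 : ℝ) < M - 1), div_le_iff₀ (by linarith),
    show (y : ℝ) * (M - y) - x * (M - x) = (y - x) * (M - x - y) by ring, abs_mul,
    abs_of_pos (by linarith : (0 : ℝ) < y - x)]
  exact mul_le_mul_of_nonneg_left (abs_le.2 ⟨by linarith, by linarith⟩) (by linarith)

lemma abs_deviation_sub_le (hM : 2 ≤ M) {ξ : Fin M → Fin M} (hξ : ξ ∈ matchings M) {x y : ℕ}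
    (hxy : x ≤ y) (hy : y ≤ M) : |deviation M y ξ - deviation M x ξ| ≤ 2 * ((y : ℝ) - x) := by
  have hcross := abs_crossCount_sub_le (fun i hi => by
    simp only [initialSeg, mem_filter, mem_univ, true_and] at hi ⊢
    omega : initialSeg M x ⊆ initialSeg M y) (injective_of_mem_matchings hξ)
  rw [card_initialSeg_sdiff hxy hy, Nat.cast_sub hxy] at hcross
  rw [deviation_eq hy, deviation_eq (hxy.trans hy)]
  have hmean := abs_mul_sub_div_sub_le hM hxy hy
  calc _ = |((crossCount (initialSeg M y) ξ : ℝ) - crossCount (initialSeg M x) ξ)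
        - ((y : ℝ) * (M - y) / (M - 1) - x * (M - x) / (M - 1))| := by ring_nf
    _ ≤ _ := abs_sub _ _
    _ ≤ _ := by linarith

lemma card_exists_abs_deviation_gt_mul_sq_le (hM : 4 ≤ M) {h : ℕ} (hh : 0 < h) {T : ℝ}
    (hT : 0 ≤ T) :
    #{ξ ∈ matchings M | ∃ x ≤ M, T + 2 * h < |deviation M x ξ|} * T ^ 2
      ≤ ((M / h + 1 : ℕ) : ℝ) * (M * #(matchings M)) := by
  have hcover : {ξ ∈ matchings M | ∃ x ≤ M, T + 2 * h < |deviation M x ξ|}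
      ⊆ (range (M / h + 1)).biUnion fun j => {ξ ∈ matchings M | T < |deviation M (j * h) ξ|} := by
    intro ξ hξ
    obtain ⟨hξ, x, hxM, hx⟩ := mem_filter.1 hξ
    refine mem_biUnion.2 ⟨x / h, mem_range.2 (Nat.lt_succ_of_le (Nat.div_le_div_right hxM)),
      mem_filter.2 ⟨hξ, ?_⟩⟩
    have hlo : x / h * h ≤ x := Nat.div_mul_le_self x h
    have hgap : (x : ℝ) - (x / h * h : ℕ) ≤ h := by
      rw [sub_le_iff_le_add]
      exact_mod_cast (Nat.lt_div_mul_add hh).le.trans_eq (add_comm _ _)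
    have hlip := abs_deviation_sub_le (by omega) hξ hlo hxM
    linarith [abs_sub_abs_le_abs_sub (deviation M x ξ) (deviation M (x / h * h) ξ)]
  calc _ ≤ (∑ j ∈ range (M / h + 1),
          (#{ξ ∈ matchings M | T < |deviation M (j * h) ξ|} : ℝ)) * T ^ 2 := by
        gcongr
        exact_mod_cast (card_le_card hcover).trans card_biUnion_le
    _ ≤ ∑ _j ∈ range (M / h + 1), (M : ℝ) * #(matchings M) := by
        rw [sum_mul]
        refine sum_le_sum fun j hj => card_abs_deviation_gt_mul_sq_le hM ?_ hT
        exact (Nat.mul_le_mul_right h (Nat.lt_succ_iff.1 (mem_range.1 hj))).trans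
          (Nat.div_mul_le_self M h)
    _ = _ := by rw [sum_const, card_range, nsmul_eq_mul]

lemma card_exists_abs_deviation_gt_le (hM : 4 ≤ M) {s : ℝ} (hs : 1 ≤ s) (hsM : s ^ 4 = M) :
    (#{ξ ∈ matchings M | ∃ x ≤ M, 8 * s ^ 3 < |deviation M x ξ|} : ℝ)
      ≤ 8 * s⁻¹ * #(matchings M) := by
  have hs0 : 0 < s := by linarith
  set h := ⌈s ^ 3⌉₊
  have hh : (h : ℝ) ≤ 2 * s ^ 3 := (Nat.ceil_lt_add_one (by positivity)).le.trans
    (by nlinarith [one_le_pow₀ (n := 3) hs])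
  have hgrid : ((M / h + 1 : ℕ) : ℝ) ≤ 2 * s := by
    have : ((M / h : ℕ) : ℝ) ≤ s := Nat.cast_div_le.trans <| by
      rw [div_le_iff₀ (by positivity), ← hsM]
      nlinarith [Nat.le_ceil (s ^ 3), pow_pos hs0 3]
    push_cast
    linarith
  have hcount := card_exists_abs_deviation_gt_mul_sq_le hM (Nat.ceil_pos.2 (pow_pos hs0 3))
    (T := 4 * s ^ 3) (by positivity)
  set m : ℝ := (#(matchings M) : ℝ)
  have key : #{ξ ∈ matchings M | ∃ x ≤ M, 8 * s ^ 3 < |deviation M x ξ|} * s * 8 * (2 * s ^ 5)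
      ≤ m * (2 * s ^ 5) :=
    calc _ = #{ξ ∈ matchings M | ∃ x ≤ M, 8 * s ^ 3 < |deviation M x ξ|} * (4 * s ^ 3) ^ 2 := by
          ring
      _ ≤ #{ξ ∈ matchings M | ∃ x ≤ M, 4 * s ^ 3 + 2 * h < |deviation M x ξ|}
          * (4 * s ^ 3) ^ 2 := by
          gcongr
          linarith
      _ ≤ ((M / h + 1 : ℕ) : ℝ) * (M * m) := hcount
      _ ≤ 2 * s * (s ^ 4 * m) := by rw [hsM]; gcongr
      _ = m * (2 * s ^ 5) := by ring
  have hEs := le_of_mul_le_mul_right key (by positivity)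
  rw [show 8 * s⁻¹ * m = 8 * m / s by field_simp, le_div_iff₀ hs0]
  linarith [Nat.cast_nonneg (α := ℝ) #(matchings M)]

end Deviation

open Classical in
/-- There exists a constant `C > 0` such that for every even integer `M ≥ 4`, a
uniformly random perfect matching of `{1,…,M}` satisfies
`P[ max_{1 ≤ x ≤ M} | Z̄_x − x(M−x)/(M−1) | > C·M^{3/4} ] ≤ C·M^{−1/4}`,
where `Z̄_x = x − Z_x`. -/
theorem stmt8 : ∃ C : ℝ, 0 < C ∧ ∀ M : ℕ, 4 ≤ M → Even M →
    (((matchings M).filter (fun ξ => ∃ x, 1 ≤ x ∧ x ≤ M ∧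
        C * (M : ℝ) ^ ((3 : ℝ)/4) <
          |((x : ℝ) - (Zcard M x ξ : ℝ)) - (x : ℝ) * ((M : ℝ) - x) / ((M : ℝ) - 1)|)).card : ℝ)
      / ((matchings M).card : ℝ) ≤ C * (M : ℝ) ^ (-(1 : ℝ)/4) := by
  refine ⟨8, by norm_num, fun M hM _ => ?_⟩
  have hM0 : (0 : ℝ) ≤ M := Nat.cast_nonneg M
  set s := (M : ℝ) ^ ((1 : ℝ) / 4)
  have hs : 1 ≤ s := Real.one_le_rpow (by exact_mod_cast (by omega : 1 ≤ M)) (by norm_num)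
  have hsM : s ^ 4 = M := by rw [← Real.rpow_mul_natCast hM0]; norm_num
  have h34 : (M : ℝ) ^ ((3 : ℝ) / 4) = s ^ 3 := by rw [← Real.rpow_mul_natCast hM0]; norm_num
  have h14 : (M : ℝ) ^ (-(1 : ℝ) / 4) = s⁻¹ := by rw [neg_div, Real.rpow_neg hM0]
  rw [h34, h14]
  refine div_le_of_le_mul₀ (Nat.cast_nonneg _) (by positivity) <|
    (Nat.cast_le.2 (card_le_card fun ξ hξ => ?_)).trans (card_exists_abs_deviation_gt_le hM hs hsM)
  obtain ⟨hξ, x, -, hxM, hx⟩ := mem_filter.1 hξ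
  exact mem_filter.2 ⟨hξ, x, hxM, hx⟩
end

section
/- Fix J > 0 and h > 0. Let f : ℕ → (0,∞) satisfy f(n) → ∞ and f(n) ≤ n, and set p = f(n)/n. Then the energy barrier Γ*_n of the Erdős–Rényi random graph ER_n(p) satisfies Γ*_n / ((1/4)·J·n·f(n)) → 1 in probability as n → ∞; that is, for every ε > 0, P[ |Γ*_n / ((1/4)·J·n·f(n)) − 1| > ε ] → 0. -/
/-- The possible edges of a simple graph on `Fin n`: non-diagonal unordered
pairs. An Erdős–Rényi sample is a function `ω` deciding which edges are present. -/
abbrev EdgeCand (n : ℕ) := {e : Sym2 (Fin n) // ¬ e.IsDiag}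

/-- The probability, under `ER_n(p)` (each possible edge present independently
with probability `p`), of a set `A` of graphs on `Fin n`. -/
noncomputable def erProb (n : ℕ) (p : ℝ) (A : Finset (EdgeCand n → Bool)) : ℝ :=
  ∑ ω ∈ A,
    p ^ (Finset.univ.filter (fun e : EdgeCand n => ω e = true)).card *
      (1 - p) ^ (Finset.univ.filter (fun e : EdgeCand n => ω e = false)).card


/-- The edge multiset of the graph sampled as `ω`: the present edges. -/
def erEdges (n : ℕ) (ω : EdgeCand n → Bool) : Multiset (Sym2 (Fin n)) :=
  (Finset.univ.filter (fun e : EdgeCand n => ω e = true)).val.map Subtype.val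

/-!
Write `S` for the set of `+` spins of `σ`. Then `H(σ) − H(⊟) = J·|E(S, Sᶜ)| − h·|S|`, so the
barrier is governed by the number of edges of the graph across cuts. Flipping the vertices one
at a time in a fixed order gives a path through `n + 1` configurations whose cuts have at most
`n²/4` candidate edges, hence mean at most `n f/4`; conversely every path from `⊟` to `⊞` passes
through a configuration with `⌊n/2⌋` plus spins, whose cut has at least `(n² − 1)/4` candidate
edges. Chernoff bounds put each of these `n + 1 + 2ⁿ` cut sizes within a factor `1 ± δ` of
`n f/4` except with probability `e⁻ⁿ` once `f` is large, so a union bound leaves `2 (2/e)ⁿ → 0`.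
The field term is at most `h n/2 = o(n f)`.
-/

open Finset Real

section Bernoulli

variable {ι : Type*} [Fintype ι] {p : ℝ}

noncomputable def bernoulliWeight (p : ℝ) (ω : ι → Bool) : ℝ :=
  p ^ (univ.filter fun i => ω i = true).card * (1 - p) ^ (univ.filter fun i => ω i = false).card

def countTrue (T : Finset ι) (ω : ι → Bool) : ℕ := (T.filter fun i => ω i = true).card

lemma bernoulliWeight_eq_prod (p : ℝ) (ω : ι → Bool) :
    bernoulliWeight p ω = ∏ i, if ω i = true then p else 1 - p := by
  rw [prod_ite, prod_const, prod_const, bernoulliWeight]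
  simp only [Bool.not_eq_true]

lemma bernoulliWeight_nonneg (hp0 : 0 ≤ p) (hp1 : p ≤ 1) (ω : ι → Bool) :
    0 ≤ bernoulliWeight p ω :=
  mul_nonneg (pow_nonneg hp0 _) (pow_nonneg (sub_nonneg.2 hp1) _)

-- `erProb n p` unfolds to `bernoulliProb p` on `EdgeCand n`; the lemmas below apply to it as is.
noncomputable def bernoulliProb (p : ℝ) (A : Finset (ι → Bool)) : ℝ :=
  ∑ ω ∈ A, bernoulliWeight p ω

lemma bernoulliProb_nonneg (hp0 : 0 ≤ p) (hp1 : p ≤ 1) (A : Finset (ι → Bool)) :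
    0 ≤ bernoulliProb p A :=
  sum_nonneg fun ω _ => bernoulliWeight_nonneg hp0 hp1 ω

lemma bernoulliProb_mono (hp0 : 0 ≤ p) (hp1 : p ≤ 1) {A B : Finset (ι → Bool)} (h : A ⊆ B) :
    bernoulliProb p A ≤ bernoulliProb p B :=
  sum_le_sum_of_subset_of_nonneg h fun ω _ _ => bernoulliWeight_nonneg hp0 hp1 ω

lemma bernoulliProb_union_le (hp0 : 0 ≤ p) (hp1 : p ≤ 1) (A B : Finset (ι → Bool)) :
    bernoulliProb p (A ∪ B) ≤ bernoulliProb p A + bernoulliProb p B := by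
  rw [bernoulliProb, bernoulliProb, bernoulliProb, ← sum_union_inter]
  exact le_add_of_nonneg_right (bernoulliProb_nonneg hp0 hp1 _)

lemma bernoulliProb_sup_le (hp0 : 0 ≤ p) (hp1 : p ≤ 1) {α : Type*} (s : Finset α)
    (A : α → Finset (ι → Bool)) :
    bernoulliProb p (s.sup A) ≤ ∑ a ∈ s, bernoulliProb p (A a) :=
  apply_sup_le_sum (by simp [bernoulliProb]) (bernoulliProb_union_le hp0 hp1 _ _) s

variable [DecidableEq ι]

lemma sum_bernoulliWeight_mul_pow_countTrue (p t : ℝ) (T : Finset ι) :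
    ∑ ω, bernoulliWeight p ω * t ^ countTrue T ω = (1 + p * (t - 1)) ^ T.card := by
  have hprod : ∀ ω : ι → Bool, bernoulliWeight p ω * t ^ countTrue T ω
      = ∏ i, (if ω i = true then p else 1 - p) * (if ω i = true ∧ i ∈ T then t else 1) := by
    intro ω
    rw [prod_mul_distrib, ← bernoulliWeight_eq_prod, prod_ite, prod_const_one, mul_one,
      prod_const, countTrue]
    congr 3
    ext i
    simp [and_comm]
  have hfactor : ∀ i, ∑ b : Bool,
      (if b = true then p else 1 - p) * (if b = true ∧ i ∈ T then t else 1)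
        = if i ∈ T then 1 + p * (t - 1) else 1 := by
    intro i
    rw [Fintype.sum_bool]
    by_cases hi : i ∈ T
    · simp [hi]; ring
    · simp [hi]
  simp_rw [hprod]
  rw [← Fintype.prod_sum fun i (b : Bool) =>
    (if b = true then p else 1 - p) * (if b = true ∧ i ∈ T then t else 1)]
  simp_rw [hfactor, prod_ite_mem, univ_inter, prod_const]

lemma bernoulliProb_le_exp (hp0 : 0 ≤ p) (hp1 : p ≤ 1) (T : Finset ι) (s a : ℝ)
    {A : Finset (ι → Bool)} (hA : ∀ ω ∈ A, s * a ≤ s * countTrue T ω) :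
    bernoulliProb p A ≤ exp (T.card * p * (exp s - 1) - s * a) := by
  have hmgf : bernoulliProb p A * exp (s * a) ≤ exp (T.card * p * (exp s - 1)) := calc
    bernoulliProb p A * exp (s * a) = ∑ ω ∈ A, bernoulliWeight p ω * exp (s * a) := sum_mul ..
    _ ≤ ∑ ω ∈ A, bernoulliWeight p ω * exp s ^ countTrue T ω := by
        gcongr with ω hω
        · exact bernoulliWeight_nonneg hp0 hp1 ω
        · rw [← exp_nat_mul, mul_comm (countTrue T ω : ℝ)]
          exact exp_le_exp.2 (hA ω hω)
    _ ≤ ∑ ω, bernoulliWeight p ω * exp s ^ countTrue T ω :=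
        sum_le_sum_of_subset_of_nonneg (subset_univ A) fun ω _ _ =>
          mul_nonneg (bernoulliWeight_nonneg hp0 hp1 ω) (pow_nonneg (exp_pos s).le _)
    _ = (1 + p * (exp s - 1)) ^ T.card := sum_bernoulliWeight_mul_pow_countTrue p (exp s) T
    _ ≤ exp (p * (exp s - 1)) ^ T.card := by
        gcongr
        · nlinarith [exp_pos s]
        · linarith [add_one_le_exp (p * (exp s - 1))]
    _ = exp (T.card * p * (exp s - 1)) := by rw [← exp_nat_mul, mul_assoc]
  rwa [exp_sub, le_div_iff₀ (exp_pos _)]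

end Bernoulli

noncomputable def chernoffRate (x : ℝ) : ℝ := (1 + x) * log (1 + x) - x

lemma chernoffRate_pos {x : ℝ} (hx : -1 < x) (hx0 : x ≠ 0) : 0 < chernoffRate x := by
  have hpos : 0 < 1 + x := by linarith
  have hlog := log_lt_sub_one_of_pos (inv_pos.2 hpos) (by simpa using hx0)
  rw [log_inv] at hlog
  have := mul_lt_mul_of_pos_left hlog hpos
  rw [mul_sub, mul_inv_cancel₀ hpos.ne'] at this
  unfold chernoffRate
  linarith

section Chernoff

variable {ι : Type*} [Fintype ι] [DecidableEq ι] {p : ℝ}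

-- `s = log (1 + x)` is the optimal choice in `bernoulliProb_le_exp`.
lemma bernoulliProb_le_exp_chernoffRate (hp0 : 0 ≤ p) (hp1 : p ≤ 1) {T : Finset ι} {x μ : ℝ}
    (hx : -1 < x) (hμ : T.card * p * x ≤ μ * x) {A : Finset (ι → Bool)}
    (hA : ∀ ω ∈ A, log (1 + x) * ((1 + x) * μ) ≤ log (1 + x) * countTrue T ω) :
    bernoulliProb p A ≤ exp (-(chernoffRate x * μ)) := by
  refine (bernoulliProb_le_exp hp0 hp1 T _ _ hA).trans (exp_le_exp.2 ?_)
  rw [exp_log (by linarith), chernoffRate]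
  linarith

lemma bernoulliProb_upper_tail_le (hp0 : 0 ≤ p) (hp1 : p ≤ 1) {T : Finset ι} {x μ : ℝ}
    (hx : 0 ≤ x) (hμ : T.card * p ≤ μ) :
    bernoulliProb p (univ.filter fun ω => (1 + x) * μ ≤ countTrue T ω)
      ≤ exp (-(chernoffRate x * μ)) :=
  bernoulliProb_le_exp_chernoffRate hp0 hp1 (by linarith) (by nlinarith) fun ω hω =>
    mul_le_mul_of_nonneg_left (mem_filter.1 hω).2 (log_nonneg (by linarith))

lemma bernoulliProb_lower_tail_le (hp0 : 0 ≤ p) (hp1 : p ≤ 1) {T : Finset ι} {x μ : ℝ}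
    (hx0 : 0 ≤ x) (hx1 : x < 1) (hμ : μ ≤ T.card * p) :
    bernoulliProb p (univ.filter fun ω => (countTrue T ω : ℝ) ≤ (1 - x) * μ)
      ≤ exp (-(chernoffRate (-x) * μ)) := by
  refine bernoulliProb_le_exp_chernoffRate hp0 hp1 (by linarith) (by nlinarith) fun ω hω => ?_
  rw [← sub_eq_add_neg]
  exact mul_le_mul_of_nonpos_left (mem_filter.1 hω).2 (log_nonpos (by linarith) (by linarith))

end Chernoff

section Ising

variable {V : Type*}

def crosses (σ : V → Bool) : Sym2 V → Bool :=
  Sym2.lift ⟨fun v w => xor (σ v) (σ w), fun v w => Bool.xor_comm (σ v) (σ w)⟩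

@[simp]
lemma crosses_mk (σ : V → Bool) (v w : V) : crosses σ s(v, w) = xor (σ v) (σ w) := rfl

lemma edgeEnergy_eq_ite (σ : V → Bool) (e : Sym2 V) :
    edgeEnergy σ e = if crosses σ e then -1 else 1 := by
  induction e using Sym2.ind with
  | _ v w => cases hv : σ v <;> cases hw : σ w <;> simp [edgeEnergy, spin, hv, hw]

lemma sum_map_edgeEnergy (σ : V → Bool) (E : Multiset (Sym2 V)) :
    (E.map (edgeEnergy σ)).sum = E.card - 2 * (E.filter (crosses σ ·)).card := by
  induction E using Multiset.induction_on with
  | empty => simp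
  | cons e E ih =>
    rw [Multiset.map_cons, Multiset.sum_cons, ih, edgeEnergy_eq_ite, Multiset.filter_cons,
      Multiset.card_cons]
    split_ifs <;> simp <;> ring

variable [Fintype V]

def plusCount (σ : V → Bool) : ℕ := (univ.filter fun v => σ v = true).card

lemma sum_spin (σ : V → Bool) : ∑ v, spin (σ v) = 2 * plusCount σ - Fintype.card V := by
  have hspin : ∀ b : Bool, spin b = 2 * (if b = true then 1 else 0) - 1 := by
    intro b; cases b <;> norm_num [spin]
  simp_rw [hspin]
  rw [sum_sub_distrib, ← mul_sum, sum_boole, sum_const, card_univ, plusCount]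
  simp

lemma hamiltonian_sub_hamiltonian_false (J h : ℝ) (E : Multiset (Sym2 V)) (σ : V → Bool) :
    hamiltonian J h E σ - hamiltonian J h E (fun _ => false)
      = J * (E.filter (crosses σ ·)).card - h * plusCount σ := by
  have hcross : E.filter (crosses (fun _ : V => false) ·) = 0 :=
    Multiset.filter_eq_nil.2 fun e _ => by induction e using Sym2.ind; simp
  have hplus : plusCount (fun _ : V => false) = 0 := by simp [plusCount]
  simp only [hamiltonian, sum_map_edgeEnergy, sum_spin, hcross, hplus, Multiset.card_zero]
  push_cast
  ring

lemma card_compl_plusCount (σ : V → Bool) :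
    (univ.filter fun v => σ v = false).card = Fintype.card V - plusCount σ := by
  have h := card_filter_add_card_filter_not (s := (univ : Finset V)) (p := fun v => σ v = true)
  simp only [Bool.not_eq_true, card_univ] at h
  rw [plusCount]
  omega

variable [DecidableEq V]

def cutSet (σ : V → Bool) : Finset {e : Sym2 V // ¬ e.IsDiag} :=
  univ.filter fun e => crosses σ e.1

lemma card_cutSet (σ : V → Bool) :
    (cutSet σ).card = plusCount σ * (Fintype.card V - plusCount σ) := by
  rw [← card_compl_plusCount, plusCount, ← card_product]
  symm
  refine card_bij (fun vw hvw => ⟨s(vw.1, vw.2), ?_⟩) (fun vw hvw => ?_) ?_ ?_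
  · simp only [mem_product, mem_filter, mem_univ, true_and] at hvw
    rw [Sym2.mk_isDiag_iff]
    rintro hvw'
    simp [hvw', hvw.2] at hvw
  · simp only [mem_product, mem_filter, mem_univ, true_and] at hvw
    simp [cutSet, hvw.1, hvw.2]
  · rintro ⟨a, b⟩ hab ⟨a', b'⟩ hab' heq
    simp only [mem_product, mem_filter, mem_univ, true_and] at hab hab'
    rcases Sym2.eq_iff.1 (congrArg Subtype.val heq) with ⟨rfl, rfl⟩ | ⟨rfl, rfl⟩
    · rfl
    · simp [hab.1] at hab'
  · rintro ⟨e, he⟩ hcut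
    induction e using Sym2.ind with
    | _ v w =>
      simp only [cutSet, mem_filter, mem_univ, true_and, crosses_mk] at hcut
      cases hv : σ v <;> cases hw : σ w <;> simp only [hv, hw] at hcut <;> simp at hcut
      · exact ⟨(w, v), by simp [hv, hw], Subtype.ext Sym2.eq_swap⟩
      · exact ⟨(v, w), by simp [hv, hw], rfl⟩

end Ising

lemma exists_apply_eq_of_succ_le_add_one {k m : ℕ} (g : Fin (k + 1) → ℕ) (h0 : g 0 ≤ m)
    (hk : m ≤ g (Fin.last k)) (hstep : ∀ i : Fin k, g i.succ ≤ g i.castSucc + 1) :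
    ∃ i, g i = m := by
  induction k with
  | zero => exact ⟨0, le_antisymm h0 hk⟩
  | succ k ih =>
    by_cases hm : m ≤ g (Fin.last k).castSucc
    · obtain ⟨i, hi⟩ := ih (g ∘ Fin.castSucc) h0 hm fun i => by
        simpa only [Function.comp, Fin.succ_castSucc] using hstep i.castSucc
      exact ⟨i.castSucc, hi⟩
    · have hlast : g (Fin.last (k + 1)) ≤ g (Fin.last k).castSucc + 1 := hstep (Fin.last k)
      exact ⟨Fin.last (k + 1), by omega⟩

section Paths

variable {V : Type*} [Fintype V] [DecidableEq V]

def IsFlipPath_s17 (ξ ζ : V → Bool) {k : ℕ} (γ : Fin (k + 1) → V → Bool) : Prop :=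
  γ 0 = ξ ∧ γ (Fin.last k) = ζ ∧ ∀ i : Fin k, IsFlipStep (γ i.castSucc) (γ i.succ)

variable {H : (V → Bool) → ℝ} {ξ ζ : V → Bool}

lemma commHeight_le_of_isFlipPath {k : ℕ} {γ : Fin (k + 1) → V → Bool}
    (hγ : IsFlipPath_s17 ξ ζ γ) {b : ℝ} (hb : ∀ i, H (γ i) ≤ b) : commHeight H ξ ζ ≤ b := by
  unfold commHeight
  refine csInf_le_of_le ⟨H ξ, ?_⟩ ⟨k, γ, hγ.1, hγ.2.1, hγ.2.2, rfl⟩ (sup'_le _ _ fun i _ => hb i)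
  rintro M ⟨k', γ', h0, -, -, rfl⟩
  exact h0 ▸ le_sup' (fun i => H (γ' i)) (mem_univ 0)

lemma le_commHeight (hne : ∃ (k : ℕ) (γ : Fin (k + 1) → V → Bool), IsFlipPath_s17 ξ ζ γ) {b : ℝ}
    (hb : ∀ (k : ℕ) (γ : Fin (k + 1) → V → Bool), IsFlipPath_s17 ξ ζ γ → ∃ i, b ≤ H (γ i)) :
    b ≤ commHeight H ξ ζ := by
  obtain ⟨k₀, γ₀, h0, hl, hs⟩ := hne
  unfold commHeight
  refine le_csInf ⟨_, k₀, γ₀, h0, hl, hs, rfl⟩ ?_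
  rintro M ⟨k, γ, h0, hl, hs, rfl⟩
  obtain ⟨i, hi⟩ := hb k γ ⟨h0, hl, hs⟩
  exact hi.trans (le_sup' (fun i => H (γ i)) (mem_univ i))

lemma plusCount_update_le (σ : V → Bool) (v : V) (b : Bool) :
    plusCount (Function.update σ v b) ≤ plusCount σ + 1 := by
  refine (card_le_card fun w hw => ?_).trans (card_insert_le v _)
  by_cases hwv : w = v
  · exact mem_insert.2 (Or.inl hwv)
  · simp_all

lemma exists_plusCount_eq {k : ℕ} {γ : Fin (k + 1) → V → Bool}
    (hγ : IsFlipPath_s17 (fun _ => false) (fun _ => true) γ) {m : ℕ} (hm : m ≤ Fintype.card V) :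
    ∃ i, plusCount (γ i) = m := by
  refine exists_apply_eq_of_succ_le_add_one (plusCount ∘ γ) ?_ ?_ fun i => ?_
  · simp [hγ.1, plusCount]
  · simpa [hγ.2.1, plusCount] using hm
  · obtain ⟨v, hv⟩ := hγ.2.2 i
    simpa only [Function.comp, hv] using plusCount_update_le _ v _

lemma gammaStar_le_of_isFlipPath {k : ℕ} {γ : Fin (k + 1) → V → Bool}
    (hγ : IsFlipPath_s17 (fun _ => false) (fun _ => true) γ) {b : ℝ}
    (hb : ∀ i, H (γ i) - H (fun _ => false) ≤ b) : gammaStar H ≤ b := by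
  have := commHeight_le_of_isFlipPath (H := H) hγ (b := H (fun _ => false) + b)
    fun i => by linarith [hb i]
  rw [gammaStar]
  linarith

lemma le_gammaStar_of_plusCount_eq
    (hne : ∃ (k : ℕ) (γ : Fin (k + 1) → V → Bool), IsFlipPath_s17 (fun _ => false) (fun _ => true) γ)
    {m : ℕ} (hm : m ≤ Fintype.card V) {b : ℝ}
    (hb : ∀ σ, plusCount σ = m → b ≤ H σ - H (fun _ => false)) : b ≤ gammaStar H := by
  have := le_commHeight (H := H) hne (b := H (fun _ => false) + b) fun k γ hγ => by
    obtain ⟨i, hi⟩ := exists_plusCount_eq hγ hm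
    exact ⟨i, by linarith [hb _ hi]⟩
  rw [gammaStar]
  linarith

end Paths

section Monotone

def monoConfig (n : ℕ) (k : Fin (n + 1)) : Fin n → Bool := fun v => decide ((v : ℕ) < k)

lemma isFlipPath_monoConfig (n : ℕ) :
    IsFlipPath_s17 (fun _ => false) (fun _ => true) (monoConfig n) := by
  refine ⟨funext fun v => by simp [monoConfig], funext fun v => by simp [monoConfig],
    fun i => ⟨i, funext fun v => ?_⟩⟩
  by_cases hv : v = i
  · subst hv
    simp [monoConfig]
  · have : (v : ℕ) ≠ i := fun h => hv (Fin.ext h)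
    rw [Function.update_of_ne hv]
    simp only [monoConfig, Fin.val_succ, Fin.val_castSucc]
    exact decide_eq_decide.2 (by omega)

variable {n : ℕ}

lemma plusCount_monoConfig (k : Fin (n + 1)) : plusCount (monoConfig n k) = k := by
  simp [plusCount, monoConfig, Fin.card_filter_val_lt, Nat.lt_succ_iff.1 k.isLt]

variable {J h : ℝ} (E : Multiset (Sym2 (Fin n)))

lemma gammaStar_hamiltonian_le (hJ : 0 ≤ J) (hh : 0 ≤ h) {C : ℝ}
    (hC : ∀ k, ((E.filter (crosses (monoConfig n k) ·)).card : ℝ) ≤ C) :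
    gammaStar (hamiltonian J h E) ≤ J * C :=
  gammaStar_le_of_isFlipPath (isFlipPath_monoConfig n) fun k => by
    rw [hamiltonian_sub_hamiltonian_false]
    have : 0 ≤ h * plusCount (monoConfig n k) := by positivity
    linarith [mul_le_mul_of_nonneg_left (hC k) hJ]

lemma le_gammaStar_hamiltonian (hJ : 0 ≤ J) {C : ℝ}
    (hC : ∀ σ, plusCount σ = n / 2 → C ≤ (E.filter (crosses σ ·)).card) :
    J * C - h * (n / 2 : ℕ) ≤ gammaStar (hamiltonian J h E) :=
  le_gammaStar_of_plusCount_eq ⟨n, _, isFlipPath_monoConfig n⟩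
    (by simpa using Nat.div_le_self n 2) fun σ hσ => by
      rw [hamiltonian_sub_hamiltonian_false, hσ]
      linarith [mul_le_mul_of_nonneg_left (hC σ hσ) hJ]

lemma card_filter_crosses_erEdges (ω : EdgeCand n → Bool) (σ : Fin n → Bool) :
    ((erEdges n ω).filter (crosses σ ·)).card = countTrue (cutSet σ) ω := by
  simp [erEdges, countTrue, cutSet, Multiset.filter_map, ← Finset.filter_val, filter_filter,
    and_comm]

end Monotone

section ErdosRenyi

variable {n : ℕ} {f : ℝ}

lemma natCast_mul_sub_le_sq_div_four {k n : ℕ} (hk : k ≤ n) :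
    ((k * (n - k) : ℕ) : ℝ) ≤ (n : ℝ) ^ 2 / 4 := by
  rw [Nat.cast_mul, Nat.cast_sub hk]
  nlinarith [sq_nonneg ((n : ℝ) - 2 * k)]

lemma sq_sub_one_div_four_le (n : ℕ) : ((n : ℝ) ^ 2 - 1) / 4 ≤ ((n / 2 * (n - n / 2) : ℕ) : ℝ) := by
  have key : n * n ≤ 4 * (n / 2 * (n - n / 2)) + 1 := by
    obtain ⟨q, rfl | rfl⟩ := Nat.even_or_odd' n
    · rw [show 2 * q / 2 = q by omega, show 2 * q - q = q by omega]
      nlinarith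
    · rw [show (2 * q + 1) / 2 = q by omega, show 2 * q + 1 - q = q + 1 by omega]
      nlinarith
  have : ((n * n : ℕ) : ℝ) ≤ ((4 * (n / 2 * (n - n / 2)) + 1 : ℕ) : ℝ) := by exact_mod_cast key
  push_cast at this ⊢
  linarith

lemma erProb_monoCut_upper_tail_le (hn : 1 ≤ n) (hf0 : 0 < f) (hfn : f ≤ n) {δ : ℝ}
    (hδ : 0 ≤ δ) (hrate : 4 ≤ chernoffRate δ * f) (k : Fin (n + 1)) :
    erProb n (f / n) (univ.filter fun ω =>
      (1 + δ) * (n * f / 4) ≤ countTrue (cutSet (monoConfig n k)) ω) ≤ exp (-n) := by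
  have hn0 : (0 : ℝ) < n := by exact_mod_cast hn
  have hp0 : 0 ≤ f / n := by positivity
  have hmean : ((cutSet (monoConfig n k)).card : ℝ) * (f / n) ≤ n * f / 4 := calc
    ((cutSet (monoConfig n k)).card : ℝ) * (f / n) ≤ (n : ℝ) ^ 2 / 4 * (f / n) := by
      rw [card_cutSet, plusCount_monoConfig, Fintype.card_fin]
      exact mul_le_mul_of_nonneg_right
        (natCast_mul_sub_le_sq_div_four (Nat.lt_succ_iff.1 k.isLt)) hp0
    _ = n * f / 4 := by field_simp
  refine (bernoulliProb_upper_tail_le hp0 (div_le_one_of_le₀ hfn hn0.le) hδ hmean).trans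
    (exp_le_exp.2 ?_)
  nlinarith [mul_le_mul_of_nonneg_right hrate hn0.le]

lemma erProb_balancedCut_lower_tail_le (hn : 1 ≤ n) (hf0 : 0 < f) (hfn : f ≤ n) {δ : ℝ}
    (hδ0 : 0 < δ) (hδ1 : δ < 1) (hrate : 4 ≤ chernoffRate (-δ) * (f - 1)) {σ : Fin n → Bool}
    (hσ : plusCount σ = n / 2) :
    erProb n (f / n) (univ.filter fun ω =>
      (countTrue (cutSet σ) ω : ℝ) ≤ (1 - δ) * ((n * f - 1) / 4)) ≤ exp (-n) := by
  have hn0 : (0 : ℝ) < n := by exact_mod_cast hn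
  have hp0 : 0 ≤ f / n := by positivity
  have hp1 : f / n ≤ 1 := div_le_one_of_le₀ hfn hn0.le
  have hmean : (n * f - 1) / 4 ≤ ((cutSet σ).card : ℝ) * (f / n) := calc
    (n * f - 1) / 4 ≤ (n * f - f / n) / 4 := by linarith
    _ = ((n : ℝ) ^ 2 - 1) / 4 * (f / n) := by field_simp
    _ ≤ ((cutSet σ).card : ℝ) * (f / n) := by
      rw [card_cutSet, hσ, Fintype.card_fin]
      exact mul_le_mul_of_nonneg_right (sq_sub_one_div_four_le n) hp0
  refine (bernoulliProb_lower_tail_le hp0 hp1 hδ0.le hδ1 hmean).trans (exp_le_exp.2 ?_)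
  have hrate0 := chernoffRate_pos (x := -δ) (by linarith) (by linarith)
  nlinarith [mul_le_mul_of_nonneg_right hrate hn0.le, mul_nonneg hrate0.le (sub_nonneg.2
    (show (1 : ℝ) ≤ n by exact_mod_cast hn))]

end ErdosRenyi

lemma abs_div_sub_one_le_of_cut_bounds {J h f ε δ Γ : ℝ} {n : ℕ} (hJ : 0 < J) (hh : 0 ≤ h)
    (hn : 1 ≤ n) (hf0 : 0 < f) (hδ0 : 0 ≤ δ) (hδε : δ ≤ ε) (hJf : J + 2 * h ≤ (ε - δ) * J * f)
    (hup : Γ ≤ J * ((1 + δ) * (n * f / 4)))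
    (hlow : J * ((1 - δ) * ((n * f - 1) / 4)) - h * (n / 2 : ℕ) ≤ Γ) :
    |Γ / ((1 / 4) * J * n * f) - 1| ≤ ε := by
  have hn1 : (1 : ℝ) ≤ n := by exact_mod_cast hn
  have hD : 0 < (1 / 4) * J * n * f := by positivity
  have hhalf : h * (n / 2 : ℕ) ≤ h * (n / 2) := mul_le_mul_of_nonneg_left Nat.cast_div_le hh
  rw [abs_le, le_sub_iff_add_le, sub_le_iff_le_add, le_div_iff₀ hD, div_le_iff₀ hD]
  constructor
  · nlinarith [mul_le_mul_of_nonneg_right hJf (by positivity : (0 : ℝ) ≤ n / 4),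
      mul_nonneg hJ.le hδ0, mul_le_mul_of_nonneg_left hn1 hJ.le]
  · nlinarith [mul_nonneg (mul_nonneg (mul_nonneg (sub_nonneg.2 hδε) hJ.le) hf0.le)
      (by positivity : (0 : ℝ) ≤ n)]

lemma exists_large_or_small_cut {J h f ε δ : ℝ} {n : ℕ} (hJ : 0 < J) (hh : 0 ≤ h) (hn : 1 ≤ n)
    (hf0 : 0 < f) (hδ0 : 0 ≤ δ) (hδε : δ ≤ ε) (hJf : J + 2 * h ≤ (ε - δ) * J * f)
    {ω : EdgeCand n → Bool}
    (hω : ε < |gammaStar (hamiltonian J h (erEdges n ω)) / ((1 / 4) * J * n * f) - 1|) :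
    (∃ k : Fin (n + 1), (1 + δ) * (n * f / 4) ≤ countTrue (cutSet (monoConfig n k)) ω) ∨
      ∃ σ : Fin n → Bool, plusCount σ = n / 2 ∧
        (countTrue (cutSet σ) ω : ℝ) ≤ (1 - δ) * ((n * f - 1) / 4) := by
  by_contra! hcut
  obtain ⟨hupper, hlower⟩ := hcut
  have hΓup := gammaStar_hamiltonian_le (erEdges n ω) hJ.le hh
    fun k => (card_filter_crosses_erEdges ω _).symm ▸ (hupper k).le
  have hΓlow := le_gammaStar_hamiltonian (erEdges n ω) (h := h) hJ.le
    fun σ hσ => (card_filter_crosses_erEdges ω σ).symm ▸ (hlower σ hσ).le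
  exact hω.not_ge (abs_div_sub_one_le_of_cut_bounds hJ hh hn hf0 hδ0 hδε hJf hΓup hΓlow)

open Classical in
lemma erProb_deviation_le {J h f ε δ : ℝ} {n : ℕ} (hJ : 0 < J) (hh : 0 < h) (hn : 1 ≤ n)
    (hf0 : 0 < f) (hfn : f ≤ n) (hδ0 : 0 < δ) (hδ1 : δ < 1) (hδε : δ ≤ ε)
    (hup : 4 ≤ chernoffRate δ * f) (hlow : 4 ≤ chernoffRate (-δ) * (f - 1))
    (hJf : J + 2 * h ≤ (ε - δ) * J * f) :
    erProb n (f / n) (univ.filter fun ω : EdgeCand n → Bool =>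
      ε < |gammaStar (hamiltonian J h (erEdges n ω)) / ((1 / 4) * J * n * f) - 1|)
      ≤ 2 * (2 / exp 1) ^ n := by
  have hp0 : 0 ≤ f / n := by positivity
  have hp1 : f / n ≤ 1 := div_le_one_of_le₀ hfn (Nat.cast_nonneg n)
  set balanced := univ.filter fun σ : Fin n → Bool => plusCount σ = n / 2
  set upper := fun k : Fin (n + 1) => univ.filter fun ω : EdgeCand n → Bool =>
    (1 + δ) * (n * f / 4) ≤ countTrue (cutSet (monoConfig n k)) ω
  set lower := fun σ : Fin n → Bool => univ.filter fun ω : EdgeCand n → Bool =>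
    (countTrue (cutSet σ) ω : ℝ) ≤ (1 - δ) * ((n * f - 1) / 4)
  have hsub : (univ.filter fun ω : EdgeCand n → Bool =>
      ε < |gammaStar (hamiltonian J h (erEdges n ω)) / ((1 / 4) * J * n * f) - 1|)
        ⊆ univ.sup upper ∪ balanced.sup lower := fun ω hω => by
    simpa [upper, lower, balanced, mem_sup] using
      exists_large_or_small_cut hJ hh.le hn hf0 hδ0.le hδε hJf (mem_filter.1 hω).2
  have hbalanced : balanced.card ≤ 2 ^ n :=
    (card_filter_le _ _).trans (by simp)
  calc _ ≤ bernoulliProb (f / n) (univ.sup upper ∪ balanced.sup lower) :=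
        bernoulliProb_mono hp0 hp1 hsub
    _ ≤ ∑ k, bernoulliProb (f / n) (upper k) + ∑ σ ∈ balanced, bernoulliProb (f / n) (lower σ) :=
        (bernoulliProb_union_le hp0 hp1 _ _).trans
          (add_le_add (bernoulliProb_sup_le hp0 hp1 _ _) (bernoulliProb_sup_le hp0 hp1 _ _))
    _ ≤ ∑ _k : Fin (n + 1), exp (-n) + ∑ _σ ∈ balanced, exp (-n) := by
        gcongr with k _ σ hσ
        · exact erProb_monoCut_upper_tail_le hn hf0 hfn hδ0.le hup k
        · exact erProb_balancedCut_lower_tail_le hn hf0 hfn hδ0 hδ1 hlow (mem_filter.1 hσ).2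
    _ = ((n + 1 + balanced.card : ℕ) : ℝ) * exp (-n) := by
        simp only [sum_const, card_univ, Fintype.card_fin, nsmul_eq_mul]
        push_cast
        ring
    _ ≤ ((2 * 2 ^ n : ℕ) : ℝ) * exp (-n) := by
        gcongr
        have := n.lt_two_pow_self
        omega
    _ = 2 * (2 / exp 1) ^ n := by
        rw [div_pow, ← exp_nat_mul, mul_one, exp_neg]
        push_cast
        ring

open Classical in
/-- Fix `J > 0` and `h > 0`. Let `f : ℕ → (0,∞)` satisfy `f(n) → ∞` and
`f(n) ≤ n`, and set `p = f(n)/n`. Then the energy barrier `Γ*_n` of the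
Erdős–Rényi random graph `ER_n(p)` satisfies
`Γ*_n / ((1/4)·J·n·f(n)) → 1` in probability: for every `ε > 0`,
`P[|Γ*_n / ((1/4)·J·n·f(n)) − 1| > ε] → 0`. -/
theorem stmt17 (J h : ℝ) (hJ : 0 < J) (hh : 0 < h)
    (f : ℕ → ℝ) (hf : ∀ n, 0 < f n) (hfn : ∀ n : ℕ, 1 ≤ n → f n ≤ n)
    (hftop : Filter.Tendsto f Filter.atTop Filter.atTop) :
    ∀ ε : ℝ, 0 < ε →
      Filter.Tendsto (fun n => erProb n (f n / n)
          (Finset.univ.filter (fun ω : EdgeCand n → Bool =>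
            ε < |gammaStar (hamiltonian J h (erEdges n ω))
                    / ((1/4) * J * n * f n) - 1|)))
        Filter.atTop (nhds 0) := by
  intro ε hε
  set δ := min (ε / 2) (1 / 2)
  have hδ0 : 0 < δ := lt_min (by linarith) (by norm_num)
  have hδ1 : δ < 1 := (min_le_right _ _).trans_lt (by norm_num)
  have hδε : δ < ε := (min_le_left _ _).trans_lt (by linarith)
  have hup := (hftop.const_mul_atTop (chernoffRate_pos (by linarith) hδ0.ne')).eventually_ge_atTop 4
  have hlow := ((Filter.tendsto_atTop_add_const_right _ (-1) hftop).const_mul_atTop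
    (chernoffRate_pos (x := -δ) (by linarith) (by linarith))).eventually_ge_atTop 4
  have hJf := (hftop.const_mul_atTop (mul_pos (sub_pos.2 hδε) hJ)).eventually_ge_atTop (J + 2 * h)
  have hbound : ∀ᶠ n in Filter.atTop, erProb n (f n / n) (univ.filter fun ω : EdgeCand n → Bool =>
      ε < |gammaStar (hamiltonian J h (erEdges n ω)) / ((1 / 4) * J * n * f n) - 1|)
        ≤ 2 * (2 / exp 1) ^ n := by
    filter_upwards [hup, hlow, hJf, Filter.eventually_ge_atTop 1] with n hup hlow hJf hn
    exact erProb_deviation_le hJ hh hn (hf n) (hfn n hn) hδ0 hδ1 hδε.le hup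
      (by rwa [sub_eq_add_neg]) hJf
  have hratio : 2 / exp 1 < 1 := by
    rw [div_lt_one (exp_pos 1)]
    linarith [add_one_lt_exp one_ne_zero]
  refine squeeze_zero' ?_ hbound ?_
  · filter_upwards [Filter.eventually_ge_atTop 1] with n hn
    exact bernoulliProb_nonneg (div_nonneg (hf n).le n.cast_nonneg)
      (div_le_one_of_le₀ (hfn n hn) n.cast_nonneg) _
  · simpa using (tendsto_pow_atTop_nhds_zero_of_lt_one (by positivity) hratio).const_mul 2
end
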